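/- Let (Ω, μ) be a finite measure space, (ρ_n) nonnegative measurable functions, and γ_n → ∞ with ∫_Ω ρ_n^{γ_n} dμ ≤ c·γ_n for all n. Define φ_n = (ρ_n − 1)_+ = max(ρ_n − 1, 0). Then for every p > 1, ∫_Ω φ_n^p dμ → 0 as n → ∞; more precisely, for large n, ∫_Ω φ_n^p dμ ≤ C/(c_p · γ_n^{p−1}) for constants C, c_p depending only on c, p, μ(Ω). -/

import Mathlib

/-! On `{ρ > 1}` one has `1 + φ = ρ`, so Bernoulli's inequality `(γ/p) φ ≤ (1 + φ)^(γ/p)`, raised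
to the power `p`, gives `(γ/p)^p φ^p ≤ ρ^γ` there; off that set `φ = 0`. Integrating,
`γ^p ∫ φ^p ≤ p^p (μ(Ω) + c γ) ≤ p^p (c + 1) γ` once `γ ≥ μ(Ω)`. -/

open MeasureTheory Filter

theorem rpow_le_div_rpow_mul_one_add_rpow {f p g : ℝ} (hf : 0 ≤ f) (hp : 0 < p) (hpg : p ≤ g) :
    f ^ p ≤ (p / g) ^ p * (1 + f) ^ g := by
  have hg : 0 < g := hp.trans_le hpg
  have bernoulli : g / p * f ≤ (1 + f) ^ (g / p) :=
    le_trans (by linarith) (one_add_mul_self_le_rpow_one_add (by linarith) ((one_le_div hp).2 hpg))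
  calc f ^ p = (p / g) ^ p * (g / p * f) ^ p := by
        rw [Real.mul_rpow (by positivity) hf, ← mul_assoc, ← Real.mul_rpow (by positivity)
          (by positivity), div_mul_div_cancel₀ hg.ne', div_self hp.ne', Real.one_rpow, one_mul]
    _ ≤ (p / g) ^ p * ((1 + f) ^ (g / p)) ^ p := by gcongr
    _ = (p / g) ^ p * (1 + f) ^ g := by
        rw [← Real.rpow_mul (by linarith), div_mul_cancel₀ _ hp.ne']

theorem one_add_max_sub_one_rpow_le (a g : ℝ) : (1 + max (a - 1) 0) ^ g ≤ max (a ^ g) 1 := by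
  rcases le_total a 1 with h | h
  · simp [max_eq_right (sub_nonpos.2 h)]
  · simp [max_eq_left (sub_nonneg.2 h)]

theorem lintegral_max_sub_one_rpow_le {Ω : Type*} [MeasurableSpace Ω] (μ : Measure Ω)
    (ρ : Ω → ℝ) {p g : ℝ} (hp : 0 < p) (hpg : p ≤ g) :
    ∫⁻ x, ENNReal.ofReal (max (ρ x - 1) 0 ^ p) ∂μ ≤
      ENNReal.ofReal ((p / g) ^ p) * (μ Set.univ + ∫⁻ x, ENNReal.ofReal (ρ x ^ g) ∂μ) := by
  have hconst : 0 ≤ (p / g) ^ p := Real.rpow_nonneg (div_nonneg hp.le (hp.le.trans hpg)) p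
  have pointwise (x : Ω) : ENNReal.ofReal (max (ρ x - 1) 0 ^ p) ≤
      ENNReal.ofReal ((p / g) ^ p) * (1 + ENNReal.ofReal (ρ x ^ g)) := by
    calc ENNReal.ofReal (max (ρ x - 1) 0 ^ p)
        ≤ ENNReal.ofReal ((p / g) ^ p * max (ρ x ^ g) 1) := by
          refine ENNReal.ofReal_le_ofReal ((rpow_le_div_rpow_mul_one_add_rpow (le_max_right _ _) hp
            hpg).trans ?_)
          exact mul_le_mul_of_nonneg_left (one_add_max_sub_one_rpow_le _ _) hconst
      _ ≤ ENNReal.ofReal ((p / g) ^ p) * (1 + ENNReal.ofReal (ρ x ^ g)) := by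
          rw [ENNReal.ofReal_mul hconst, ENNReal.ofReal_max, ENNReal.ofReal_one]
          gcongr
          exact max_le le_add_self le_self_add
  calc ∫⁻ x, ENNReal.ofReal (max (ρ x - 1) 0 ^ p) ∂μ
      ≤ ∫⁻ x, ENNReal.ofReal ((p / g) ^ p) * (1 + ENNReal.ofReal (ρ x ^ g)) ∂μ :=
        lintegral_mono pointwise
    _ = _ := by
        rw [lintegral_const_mul' _ _ ENNReal.ofReal_ne_top, lintegral_add_left measurable_const,
          lintegral_one]

theorem lintegral_max_sub_one_rpow_le_of_lintegral_rpow_le {Ω : Type*} [MeasurableSpace Ω]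
    (μ : Measure Ω) (ρ : Ω → ℝ) {p g c : ℝ} (hp : 0 < p) (hpg : p ≤ g) (hc : 0 ≤ c)
    (hμ : μ Set.univ ≤ ENNReal.ofReal g)
    (hρ : ∫⁻ x, ENNReal.ofReal (ρ x ^ g) ∂μ ≤ ENNReal.ofReal (c * g)) :
    ∫⁻ x, ENNReal.ofReal (max (ρ x - 1) 0 ^ p) ∂μ ≤
      ENNReal.ofReal (p ^ p * (c + 1) / g ^ (p - 1)) := by
  have hg : 0 < g := hp.trans_le hpg
  calc ∫⁻ x, ENNReal.ofReal (max (ρ x - 1) 0 ^ p) ∂μ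
      ≤ ENNReal.ofReal ((p / g) ^ p) * (μ Set.univ + ∫⁻ x, ENNReal.ofReal (ρ x ^ g) ∂μ) :=
        lintegral_max_sub_one_rpow_le μ ρ hp hpg
    _ ≤ ENNReal.ofReal ((p / g) ^ p) * ENNReal.ofReal ((c + 1) * g) := by
        rw [add_one_mul, ENNReal.ofReal_add (by positivity) hg.le, add_comm]
        gcongr
    _ = ENNReal.ofReal (p ^ p * (c + 1) / g ^ (p - 1)) := by
        rw [← ENNReal.ofReal_mul (by positivity), Real.div_rpow hp.le hg.le,
          Real.rpow_sub_one hg.ne']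
        congr 1
        field_simp

theorem stmt_4_general {Ω : Type*} [MeasurableSpace Ω] (μ : Measure Ω) [IsFiniteMeasure μ]
    (ρ : ℕ → Ω → ℝ) (γ : ℕ → ℝ) (c : ℝ) (hc : 0 < c)
    (hγ : Tendsto γ atTop atTop)
    (hbd : ∀ n, ∫⁻ x, ENNReal.ofReal (ρ n x ^ γ n) ∂μ ≤ ENNReal.ofReal (c * γ n))
    (φ : ℕ → Ω → ℝ) (hφ : ∀ n x, φ n x = max (ρ n x - 1) 0)
    (p : ℝ) (hp : 1 < p) :
    Tendsto (fun n => ∫⁻ x, ENNReal.ofReal (φ n x ^ p) ∂μ) atTop (nhds 0) ∧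
      ∃ C cp : ℝ, 0 < C ∧ 0 < cp ∧ ∀ᶠ n in atTop,
        ∫⁻ x, ENNReal.ofReal (φ n x ^ p) ∂μ ≤ ENNReal.ofReal (C / (cp * γ n ^ (p - 1))) := by
  have bound : ∀ᶠ n in atTop, ∫⁻ x, ENNReal.ofReal (φ n x ^ p) ∂μ ≤
      ENNReal.ofReal (p ^ p * (c + 1) / (1 * γ n ^ (p - 1))) := by
    filter_upwards [hγ.eventually_ge_atTop p, hγ.eventually_ge_atTop (μ Set.univ).toReal]
      with n hpγ hμγ
    simp only [hφ, one_mul]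
    refine lintegral_max_sub_one_rpow_le_of_lintegral_rpow_le μ (ρ n) (by linarith) hpγ hc.le
      ?_ (hbd n)
    exact (ENNReal.le_ofReal_iff_toReal_le (measure_ne_top μ _) (by linarith)).2 hμγ
  have bound_tendsto : Tendsto (fun n => ENNReal.ofReal (p ^ p * (c + 1) / (1 * γ n ^ (p - 1))))
      atTop (nhds 0) := by
    simp only [one_mul]
    simpa using ENNReal.tendsto_ofReal
      (tendsto_const_nhds.div_atTop ((tendsto_rpow_atTop (by linarith)).comp hγ))
  exact ⟨tendsto_of_tendsto_of_tendsto_of_le_of_le' tendsto_const_nhds bound_tendsto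
    (Eventually.of_forall fun _ => zero_le) bound, _, 1, by positivity, one_pos, bound⟩

theorem stmt_4 {Ω : Type*} [MeasurableSpace Ω] (μ : Measure Ω) [IsFiniteMeasure μ]
    (ρ : ℕ → Ω → ℝ) (γ : ℕ → ℝ) (c : ℝ) (hc : 0 < c)
    (hmeas : ∀ n, Measurable (ρ n)) (hnn : ∀ n x, 0 ≤ ρ n x)
    (hγ : Tendsto γ atTop atTop)
    (hbd : ∀ n, ∫⁻ x, ENNReal.ofReal (ρ n x ^ γ n) ∂μ ≤ ENNReal.ofReal (c * γ n))
    (φ : ℕ → Ω → ℝ) (hφ : ∀ n x, φ n x = max (ρ n x - 1) 0)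
    (p : ℝ) (hp : 1 < p) :
    Tendsto (fun n => ∫⁻ x, ENNReal.ofReal (φ n x ^ p) ∂μ) atTop (nhds 0) ∧
      ∃ C cp : ℝ, 0 < C ∧ 0 < cp ∧ ∀ᶠ n in atTop,
        ∫⁻ x, ENNReal.ofReal (φ n x ^ p) ∂μ ≤ ENNReal.ofReal (C / (cp * γ n ^ (p - 1))) :=
  stmt_4_general μ ρ γ c hc hγ hbd φ hφ p hp
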